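/- arXiv:1905.08488 — 9 statements merged into one kernel-verified Lean document; each statement's English description precedes it below -/
import Mathlib

section
/- Deviation is subadditive under composition of approximate encoded permutations: Dev(P₀ ∘ P₁) ≤ Dev(P₀) + Dev(P₁). -/
/-!
Write `S_g = {f (g, c) | c ∈ C}` for the coset of encodings of `g`. Since `f` and `v` are
injective, the number of deviated coset values of `g` is `|v(S_g) \ S_{u g}|`. For the
composition, the triangle inequality `|A \ C| ≤ |A \ B| + |B \ C|` through `B = v₀(S_{u₁ g})`,
together with `|v₀ X \ v₀ Y| = |X \ Y|`, bounds this count for `g` by the count of `P₁` at `g`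
plus the count of `P₀` at `u₁ g`; taking suprema gives the claim.
-/

/-- The deviation of an approximate encoded permutation with unencoded permutation `u`,
encoded permutation `v`, and encoder `f` (restricted to unleaked inputs `G × C`):
the maximum over inputs `g` of the fraction of coset values `c` for which `v (f (g, c))`
is not an encoding of `u g`. -/
noncomputable def dev {G E C : Type*} [Fintype G] [Fintype C] [DecidableEq E]
    (u : G → G) (v : E → E) (f : G × C → E) : ℝ :=
  ⨆ g : G,
    ((Finset.univ.filter fun c : C => ∀ c' : C, v (f (g, c)) ≠ f (u g, c')).card : ℝ) /
      (Fintype.card C)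

open Finset Function

lemma Finset.card_sdiff_le_card_sdiff_add_card_sdiff {α : Type*} [DecidableEq α]
    (s t u : Finset α) : #(s \ u) ≤ #(s \ t) + #(t \ u) :=
  (card_le_card (sdiff_triangle s t u)).trans (card_union_le _ _)

section Deviation

variable {G E C : Type*} [Fintype C] [DecidableEq E]

def coset (f : G × C → E) (g : G) : Finset E :=
  univ.image fun c => f (g, c)

def deviated (u : G → G) (v : E → E) (f : G × C → E) (g : G) : Finset C :=
  {c | ∀ c', v (f (g, c)) ≠ f (u g, c')}

lemma card_deviated_eq (u : G → G) {v : E → E} (hv : Injective v) {f : G × C → E}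
    (hf : Injective f) (g : G) :
    #(deviated u v f g) = #((coset f g).image v \ coset f (u g)) := by
  have hinj : Injective fun c : C => v (f (g, c)) :=
    hv.comp (hf.comp (Prod.mk_right_injective g))
  have himage : (coset f g).image v \ coset f (u g) =
      (deviated u v f g).image fun c => v (f (g, c)) := by
    ext e
    simp only [coset, deviated, image_image, comp_apply, mem_sdiff, mem_image, mem_filter,
      mem_univ, true_and, not_exists]
    constructor
    · rintro ⟨⟨c, rfl⟩, hc⟩
      exact ⟨c, fun c' h => hc c' h.symm, rfl⟩
    · rintro ⟨c, hc, rfl⟩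
      exact ⟨⟨c, rfl⟩, fun c' h => hc c' h.symm⟩
  rw [himage, card_image_of_injective _ hinj]

lemma card_deviated_comp_le (u₀ u₁ : G → G) {v₀ v₁ : E → E} (hv₀ : Injective v₀)
    (hv₁ : Injective v₁) {f : G × C → E} (hf : Injective f) (g : G) :
    #(deviated (u₀ ∘ u₁) (v₀ ∘ v₁) f g) ≤
      #(deviated u₀ v₀ f (u₁ g)) + #(deviated u₁ v₁ f g) := by
  rw [card_deviated_eq _ (hv₀.comp hv₁) hf, card_deviated_eq _ hv₀ hf,
    card_deviated_eq _ hv₁ hf, ← image_image, add_comm]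
  calc #(((coset f g).image v₁).image v₀ \ coset f (u₀ (u₁ g)))
      ≤ #(((coset f g).image v₁).image v₀ \ (coset f (u₁ g)).image v₀) +
          #((coset f (u₁ g)).image v₀ \ coset f (u₀ (u₁ g))) :=
        card_sdiff_le_card_sdiff_add_card_sdiff _ _ _
    _ = #((coset f g).image v₁ \ coset f (u₁ g)) +
          #((coset f (u₁ g)).image v₀ \ coset f (u₀ (u₁ g))) := by
        rw [← image_sdiff _ _ hv₀, card_image_of_injective _ hv₀]

variable [Fintype G]

lemma dev_eq_iSup (u : G → G) (v : E → E) (f : G × C → E) :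
    dev u v f = ⨆ g, (#(deviated u v f g) : ℝ) / Fintype.card C :=
  rfl

lemma dev_nonneg (u : G → G) (v : E → E) (f : G × C → E) : 0 ≤ dev u v f :=
  Real.iSup_nonneg fun _ => by positivity

lemma card_deviated_div_le_dev (u : G → G) (v : E → E) (f : G × C → E) (g : G) :
    (#(deviated u v f g) : ℝ) / Fintype.card C ≤ dev u v f :=
  le_ciSup (f := fun g => (#(deviated u v f g) : ℝ) / Fintype.card C)
    (Finite.bddAbove_range _) g

theorem dev_comp_le (u₀ u₁ : G → G) {v₀ v₁ : E → E} (hv₀ : Injective v₀)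
    (hv₁ : Injective v₁) {f : G × C → E} (hf : Injective f) :
    dev (u₀ ∘ u₁) (v₀ ∘ v₁) f ≤ dev u₀ v₀ f + dev u₁ v₁ f := by
  rw [dev_eq_iSup]
  refine Real.iSup_le (fun g => ?_) (add_nonneg (dev_nonneg _ _ _) (dev_nonneg _ _ _))
  calc (#(deviated (u₀ ∘ u₁) (v₀ ∘ v₁) f g) : ℝ) / Fintype.card C
      ≤ ((#(deviated u₀ v₀ f (u₁ g)) + #(deviated u₁ v₁ f g) : ℕ) : ℝ) / Fintype.card C := by
        gcongr
        exact card_deviated_comp_le u₀ u₁ hv₀ hv₁ hf g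
    _ = (#(deviated u₀ v₀ f (u₁ g)) : ℝ) / Fintype.card C +
          (#(deviated u₁ v₁ f g) : ℝ) / Fintype.card C := by
        push_cast
        exact add_div _ _ _
    _ ≤ dev u₀ v₀ f + dev u₁ v₁ f :=
        add_le_add (card_deviated_div_le_dev _ _ _ _) (card_deviated_div_le_dev _ _ _ _)

end Deviation

theorem dev_comp_subadditive_general {G E C L : Type*} [Fintype G] [Fintype C] [DecidableEq E]
    (u₀ u₁ : Equiv.Perm G) (v₀ v₁ : Equiv.Perm E) (f : (G × C) ⊕ L ≃ E) :
    dev (⇑u₀ ∘ ⇑u₁) (⇑v₀ ∘ ⇑v₁) (fun gc => f (Sum.inl gc)) ≤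
      dev ⇑u₀ ⇑v₀ (fun gc => f (Sum.inl gc)) + dev ⇑u₁ ⇑v₁ (fun gc => f (Sum.inl gc)) :=
  dev_comp_le u₀ u₁ v₀.injective v₁.injective (f.injective.comp Sum.inl_injective)

/-- **Deviation is subadditive under composition**: for approximate encoded permutations
`P₀ = (G, u₀, E, v₀, C, L, f)` and `P₁ = (G, u₁, E, v₁, C, L, f)` over identical sets,
`Dev(P₀ ∘ P₁) ≤ Dev(P₀) + Dev(P₁)`. -/
theorem dev_comp_subadditive {G E C L : Type*} [Fintype G] [Fintype C] [DecidableEq E]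
    [Nonempty G] [Nonempty C]
    (u₀ u₁ : Equiv.Perm G) (v₀ v₁ : Equiv.Perm E) (f : (G × C) ⊕ L ≃ E) :
    dev (⇑u₀ ∘ ⇑u₁) (⇑v₀ ∘ ⇑v₁) (fun gc => f (Sum.inl gc)) ≤
      dev ⇑u₀ ⇑v₀ (fun gc => f (Sum.inl gc)) + dev ⇑u₁ ⇑v₁ (fun gc => f (Sum.inl gc)) :=
  dev_comp_subadditive_general u₀ u₁ v₀ v₁ f
end

section
/- Deviation is subadditive under concatenation of approximate encoded permutations: Dev(P₀ ∗ P₁) ≤ Dev(P₀) + Dev(P₁). -/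
private lemma bdd_range {α : Type*} [Fintype α] (F : α → ℝ) : BddAbove (Set.range F) :=
  (Set.finite_range F).bddAbove

theorem dev_concat_aux {G E₀ E₁ C₀ C₁ : Type*}
    [Fintype G] [Fintype E₁] [Fintype C₀] [Fintype C₁]
    [DecidableEq E₀] [DecidableEq E₁] [Nonempty G] [Nonempty E₁]
    (u : G → G) (v₁ : E₁ → E₁) (v₀ : E₀ → E₀)
    (f₁ : G × C₁ → E₁) (f₀ : E₁ × C₀ → E₀) :
    dev u v₀ (fun gc : G × (C₀ × C₁) => f₀ (f₁ (gc.1, gc.2.2), gc.2.1)) ≤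
      dev v₁ v₀ f₀ + dev u v₁ f₁ := by
  classical
  simp only [dev]
  have hS₀ : (0:ℝ) ≤ ⨆ e : E₁,
      ((Finset.univ.filter fun c : C₀ => ∀ c' : C₀, v₀ (f₀ (e, c)) ≠ f₀ (v₁ e, c')).card : ℝ) /
        (Fintype.card C₀) := Real.iSup_nonneg fun e => by positivity
  have hS₁ : (0:ℝ) ≤ ⨆ g : G,
      ((Finset.univ.filter fun c : C₁ => ∀ c' : C₁, v₁ (f₁ (g, c)) ≠ f₁ (u g, c')).card : ℝ) /
        (Fintype.card C₁) := Real.iSup_nonneg fun g => by positivity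
  by_cases h0 : Fintype.card C₀ = 0 ∨ Fintype.card C₁ = 0
  · have hnC : ((Fintype.card (C₀ × C₁) : ℕ) : ℝ) = 0 := by
      rcases h0 with h | h <;> simp [Fintype.card_prod, h]
    apply ciSup_le
    intro g
    rw [hnC, div_zero]
    linarith
  · push_neg at h0
    have hn₀ : (0:ℝ) < Fintype.card C₀ := by
      have := Nat.pos_of_ne_zero h0.1; exact_mod_cast this
    have hn₁ : (0:ℝ) < Fintype.card C₁ := by
      have := Nat.pos_of_ne_zero h0.2; exact_mod_cast this
    apply ciSup_le
    intro g
    -- the three deviated sets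
    set Dc : Finset (C₀ × C₁) := Finset.univ.filter fun c : C₀ × C₁ =>
      ∀ c' : C₀ × C₁, v₀ (f₀ (f₁ (g, c.2), c.1)) ≠ f₀ (f₁ (u g, c'.2), c'.1) with hDc
    set A : Finset (C₀ × C₁) := Finset.univ.filter fun c : C₀ × C₁ =>
      ∀ c' : C₁, v₁ (f₁ (g, c.2)) ≠ f₁ (u g, c') with hA
    set B : Finset (C₀ × C₁) := Finset.univ.filter fun c : C₀ × C₁ =>
      ∀ c' : C₀, v₀ (f₀ (f₁ (g, c.2), c.1)) ≠ f₀ (v₁ (f₁ (g, c.2)), c') with hB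
    have hsub : Dc ⊆ A ∪ B := by
      intro c hc
      simp only [hDc, hA, hB, Finset.mem_filter, Finset.mem_union, Finset.mem_univ,
        true_and] at hc ⊢
      by_contra h
      push_neg at h
      obtain ⟨⟨c₁', h₁⟩, ⟨c₀', h₀⟩⟩ := h
      exact hc (c₀', c₁') (h₀.trans (by rw [h₁]))
    have hcard : Dc.card ≤ A.card + B.card :=
      le_trans (Finset.card_le_card hsub) (Finset.card_union_le _ _)
    have hAcard : A.card = Fintype.card C₀ *
        (Finset.univ.filter fun c : C₁ => ∀ c' : C₁, v₁ (f₁ (g, c)) ≠ f₁ (u g, c')).card := by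
      have : A = (Finset.univ : Finset C₀) ×ˢ
          (Finset.univ.filter fun c : C₁ => ∀ c' : C₁, v₁ (f₁ (g, c)) ≠ f₁ (u g, c')) := by
        ext ⟨a, b⟩
        simp [hA, Finset.mem_product]
      rw [this, Finset.card_product, Finset.card_univ]
    have hBcard : B.card = ∑ c₁ : C₁,
        (Finset.univ.filter fun c₀ : C₀ =>
          ∀ c' : C₀, v₀ (f₀ (f₁ (g, c₁), c₀)) ≠ f₀ (v₁ (f₁ (g, c₁)), c')).card := by
      rw [hB, Finset.card_filter, Fintype.sum_prod_type_right]
      refine Finset.sum_congr rfl fun c₁ _ => ?_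
      rw [Finset.card_filter]
    -- per-index bounds from the suprema
    have hd₀ : ∀ e : E₁,
        ((Finset.univ.filter fun c : C₀ =>
          ∀ c' : C₀, v₀ (f₀ (e, c)) ≠ f₀ (v₁ e, c')).card : ℝ) ≤
        (Fintype.card C₀) * ⨆ e : E₁,
          ((Finset.univ.filter fun c : C₀ =>
            ∀ c' : C₀, v₀ (f₀ (e, c)) ≠ f₀ (v₁ e, c')).card : ℝ) / (Fintype.card C₀) := by
      intro e
      have h := le_ciSup (bdd_range fun e : E₁ =>
        ((Finset.univ.filter fun c : C₀ =>
          ∀ c' : C₀, v₀ (f₀ (e, c)) ≠ f₀ (v₁ e, c')).card : ℝ) / (Fintype.card C₀)) e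
      rw [div_le_iff₀ hn₀] at h
      linarith [h]
    have hd₁ :
        ((Finset.univ.filter fun c : C₁ => ∀ c' : C₁, v₁ (f₁ (g, c)) ≠ f₁ (u g, c')).card : ℝ) ≤
        (Fintype.card C₁) * ⨆ g : G,
          ((Finset.univ.filter fun c : C₁ =>
            ∀ c' : C₁, v₁ (f₁ (g, c)) ≠ f₁ (u g, c')).card : ℝ) / (Fintype.card C₁) := by
      have h := le_ciSup (bdd_range fun g : G =>
        ((Finset.univ.filter fun c : C₁ =>
          ∀ c' : C₁, v₁ (f₁ (g, c)) ≠ f₁ (u g, c')).card : ℝ) / (Fintype.card C₁)) g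
      rw [div_le_iff₀ hn₁] at h
      linarith [h]
    have hnC : ((Fintype.card (C₀ × C₁) : ℕ) : ℝ)
        = (Fintype.card C₀ : ℝ) * (Fintype.card C₁ : ℝ) := by
      rw [Fintype.card_prod]; push_cast; ring
    have hnCpos : (0:ℝ) < ((Fintype.card (C₀ × C₁) : ℕ) : ℝ) := by
      rw [hnC]; positivity
    rw [div_le_iff₀ hnCpos]
    have hBsum : ((B.card : ℕ) : ℝ) ≤ (Fintype.card C₁) * ((Fintype.card C₀) *
        ⨆ e : E₁, ((Finset.univ.filter fun c : C₀ =>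
          ∀ c' : C₀, v₀ (f₀ (e, c)) ≠ f₀ (v₁ e, c')).card : ℝ) / (Fintype.card C₀)) := by
      rw [hBcard]
      push_cast
      calc (∑ c₁ : C₁, ((Finset.univ.filter fun c₀ : C₀ =>
          ∀ c' : C₀, v₀ (f₀ (f₁ (g, c₁), c₀)) ≠ f₀ (v₁ (f₁ (g, c₁)), c')).card : ℝ))
          ≤ ∑ _c₁ : C₁, ((Fintype.card C₀) *
            ⨆ e : E₁, ((Finset.univ.filter fun c : C₀ =>
              ∀ c' : C₀, v₀ (f₀ (e, c)) ≠ f₀ (v₁ e, c')).card : ℝ) / (Fintype.card C₀)) :=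
            Finset.sum_le_sum fun c₁ _ => hd₀ (f₁ (g, c₁))
        _ = (Fintype.card C₁) * ((Fintype.card C₀) * _) := by
            rw [Finset.sum_const, Finset.card_univ, nsmul_eq_mul]
    have hAc : ((A.card : ℕ) : ℝ) ≤ (Fintype.card C₀) * ((Fintype.card C₁) *
        ⨆ g : G, ((Finset.univ.filter fun c : C₁ =>
          ∀ c' : C₁, v₁ (f₁ (g, c)) ≠ f₁ (u g, c')).card : ℝ) / (Fintype.card C₁)) := by
      rw [hAcard]; push_cast
      exact mul_le_mul_of_nonneg_left hd₁ (le_of_lt hn₀)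
    have hDcc : ((Dc.card : ℕ) : ℝ) ≤ ((A.card : ℕ) : ℝ) + ((B.card : ℕ) : ℝ) := by
      exact_mod_cast hcard
    rw [hnC]
    nlinarith [hS₀, hS₁]

/-- **Deviation is subadditive under concatenation**: given
`P₁ = (G, u, E₁, v₁, C₁, L₁, f₁)` and `P₀ = (E₁, v₁, E₀, v₀, C₀, L₀, f₀)` (the encoded
permutation of `P₁` is the desired permutation of `P₀`), the concatenation
`P₀ ∗ P₁ = (G, u, E₀, v₀, C₀ × C₁, L₁, f₂)` with `f₂(g, (c₀, c₁)) = f₀(f₁(g, c₁), c₀)`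
satisfies `Dev(P₀ ∗ P₁) ≤ Dev(P₀) + Dev(P₁)`. -/
theorem dev_concat_subadditive {G E₀ E₁ C₀ C₁ L₀ L₁ : Type*}
    [Fintype G] [Fintype E₁] [Fintype C₀] [Fintype C₁]
    [DecidableEq E₀] [DecidableEq E₁] [Nonempty G] [Nonempty E₁]
    (u : Equiv.Perm G) (v₁ : Equiv.Perm E₁) (v₀ : Equiv.Perm E₀)
    (f₁ : (G × C₁) ⊕ L₁ ≃ E₁) (f₀ : (E₁ × C₀) ⊕ L₀ ≃ E₀) :
    dev ⇑u ⇑v₀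
        (fun gc : G × (C₀ × C₁) => f₀ (Sum.inl (f₁ (Sum.inl (gc.1, gc.2.2)), gc.2.1))) ≤
      dev ⇑v₁ ⇑v₀ (fun ec : E₁ × C₀ => f₀ (Sum.inl ec)) +
        dev ⇑u ⇑v₁ (fun gc : G × C₁ => f₁ (Sum.inl gc)) := by
  exact dev_concat_aux ⇑u ⇑v₁ ⇑v₀ (fun gc : G × C₁ => f₁ (Sum.inl gc))
    (fun ec : E₁ × C₀ => f₀ (Sum.inl ec))
end

section
/- For the coset representation of modular integers, the number of deviated coset values for any input is at most one: for every g ∈ ℤ/Nℤ, |Deviated_g(COM_{k,N,m})| ≤ 1, and hence Dev(COM_{k,N,m}) ≤ 2^{−m}. -/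
/-!
Since `g + k < 2N`, for `c ≤ 2^m - 2` the shifted encoding `g + cN + k` stays below
`2^m N ≤ 2^(m + ⌈log₂ N⌉)`, so the reduction modulo `2^(m + ⌈log₂ N⌉)` does nothing and
`g + cN + k = (g + k) mod N + (c + ⌊(g + k) / N⌋) N` is again a valid encoding.
Hence only the top coset value `c = 2^m - 1` can be deviated.
-/

open Finset

lemma two_pow_mul_le_two_pow_add_clog (m N : ℕ) : 2 ^ m * N ≤ 2 ^ (m + Nat.clog 2 N) := by
  rw [pow_add]
  exact Nat.mul_le_mul_left _ (Nat.le_pow_clog one_lt_two N)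

lemma add_mul_eq_mod_add_mul (a c N : ℕ) : a + c * N = a % N + (c + a / N) * N := by
  nth_rewrite 1 [← Nat.mod_add_div a N]
  ring

/-- The set `Deviated_g` of `COM_{k,N,m}`. -/
def cosetDeviated (N m k g : ℕ) : Finset ℕ :=
  filter (fun c => ∀ c' ∈ range (2 ^ m),
    (g + c * N + k) % 2 ^ (m + Nat.clog 2 N) ≠ (g + k) % N + c' * N) (range (2 ^ m))

section

variable {N m k g : ℕ}

lemma exists_coset_of_add_one_lt (hk : k < N) (hg : g < N) {c : ℕ} (hc : c + 1 < 2 ^ m) :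
    ∃ c' < 2 ^ m, (g + c * N + k) % 2 ^ (m + Nat.clog 2 N) = (g + k) % N + c' * N := by
  have hq : (g + k) / N ≤ 1 := Nat.lt_succ_iff.mp ((Nat.div_lt_iff_lt_mul (by omega)).mpr (by omega))
  have hbound : g + c * N + k < 2 ^ (m + Nat.clog 2 N) := by
    calc g + c * N + k < (c + 2) * N := by nlinarith
      _ ≤ 2 ^ m * N := Nat.mul_le_mul_right N hc
      _ ≤ 2 ^ (m + Nat.clog 2 N) := two_pow_mul_le_two_pow_add_clog m N
  refine ⟨c + (g + k) / N, by omega, ?_⟩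
  rw [Nat.mod_eq_of_lt hbound, ← add_mul_eq_mod_add_mul]
  ring

lemma cosetDeviated_subset (hk : k < N) (hg : g < N) : cosetDeviated N m k g ⊆ {2 ^ m - 1} := by
  intro c hc
  simp only [cosetDeviated, mem_filter, mem_range] at hc
  obtain ⟨hcm, hdev⟩ := hc
  rw [mem_singleton]
  by_contra hne
  obtain ⟨c', hc', heq⟩ := exists_coset_of_add_one_lt hk hg (show c + 1 < 2 ^ m by omega)
  exact hdev c' hc' heq

lemma card_cosetDeviated_le_one (hk : k < N) (hg : g < N) : (cosetDeviated N m k g).card ≤ 1 :=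
  (card_le_card (cosetDeviated_subset hk hg)).trans (card_singleton _).le

end

lemma div_two_pow_le_zpow_neg {x : ℝ} (hx : x ≤ 1) (m : ℕ) : x / 2 ^ m ≤ (2 : ℝ) ^ (-(m : ℤ)) := by
  rw [zpow_neg, zpow_natCast, ← one_div]
  gcongr

theorem coset_representation_deviation_general (N m k : ℕ) (hk : k < N)
    (g : ℕ) (hg : g < N) :
    (Finset.filter (fun c =>
        ∀ c' ∈ Finset.range (2 ^ m),
          (g + c * N + k) % 2 ^ (m + Nat.clog 2 N) ≠ (g + k) % N + c' * N) (Finset.range (2 ^ m))).card ≤ 1 ∧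
    (((Finset.filter (fun c =>
        ∀ c' ∈ Finset.range (2 ^ m),
          (g + c * N + k) % 2 ^ (m + Nat.clog 2 N) ≠ (g + k) % N + c' * N) (Finset.range (2 ^ m))).card : ℝ) /
      2 ^ m ≤ (2 : ℝ) ^ (-(m : ℤ))) := by
  have hcard : (cosetDeviated N m k g).card ≤ 1 := card_cosetDeviated_le_one hk hg
  exact ⟨hcard, div_two_pow_le_zpow_neg (by exact_mod_cast hcard) m⟩

/-- **Deviation bound for the coset representation of modular integers.**
With modulus `N ≥ 1`, padding `m`, offset `k < N`, encoder `f(g, c) = g + cN` into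
`ℤ/2^{m+⌈log₂N⌉}ℤ` and encoded permutation `v_k(e) = (e + k) mod 2^{m+⌈log₂N⌉}`:
for every input `g`, at most one coset value `c ∈ {0, …, 2^m − 1}` is deviated
(i.e. fails to decode to an encoding of `(g + k) mod N`), and hence the deviation
of `COM_{k,N,m}` is at most `2^{−m}`. -/
theorem coset_representation_deviation (N m k : ℕ) (hN : 1 ≤ N) (hk : k < N)
    (g : ℕ) (hg : g < N) :
    (Finset.filter (fun c =>
        ∀ c' ∈ Finset.range (2 ^ m),
          (g + c * N + k) % 2 ^ (m + Nat.clog 2 N) ≠ (g + k) % N + c' * N) (Finset.range (2 ^ m))).card ≤ 1 ∧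
    (((Finset.filter (fun c =>
        ∀ c' ∈ Finset.range (2 ^ m),
          (g + c * N + k) % 2 ^ (m + Nat.clog 2 N) ≠ (g + k) % N + c' * N) (Finset.range (2 ^ m))).card : ℝ) /
      2 ^ m ≤ (2 : ℝ) ^ (-(m : ℤ))) :=
  coset_representation_deviation_general N m k hk g hg
end

section
/- For the oblivious carry runway representation, only the maximal runway value can be deviated: for every g, Deviated_g(RUN_{k,p,m,n}) ⊆ {2^m − 1}, and hence Dev(RUN_{k,p,m,n}) ≤ 2^{−m}. -/
/-- **Deviation bound for oblivious carry runways.** For the runway representation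
`RUN_{k,p,m,n}` (runway of length `m` at position `p ≤ n − m` in an `n`-bit register,
offset `k ∈ ℤ`), with encoder `f(g, c) = ((g mod 2^p) + 2^p c, (⌊g/2^p⌋ − c) mod 2^{n−p})`,
encoded permutation `v_k(e₀, e₁) = ((e₀ + (k mod 2^p)) mod 2^{p+m}, (e₁ + ⌊k/2^p⌋) mod 2^{n−p})`
and decoder `f⁻¹(e₀, e₁) = ((e₀ + 2^p e₁) mod 2^n, ⌊e₀/2^p⌋)`: for every input `g`,
the set of deviated coset values is contained in `{2^m − 1}`, and hence the deviation
is at most `2^{−m}`. -/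
theorem runway_deviation (n m p : ℕ) (hp : p ≤ n - m) (k : ℤ)
    (g : ℤ) (hg0 : 0 ≤ g) (hg : g < 2 ^ n) :
    ((Finset.range (2 ^ m)).filter fun c : ℕ =>
        (((g % 2 ^ p + 2 ^ p * (c : ℤ) + k % 2 ^ p) % 2 ^ (p + m) +
            2 ^ p * ((g / 2 ^ p - (c : ℤ) + k / 2 ^ p) % 2 ^ (n - p))) % 2 ^ n) ≠
          (g + k) % 2 ^ n) ⊆ {2 ^ m - 1} ∧
    ((((Finset.range (2 ^ m)).filter fun c : ℕ =>
        (((g % 2 ^ p + 2 ^ p * (c : ℤ) + k % 2 ^ p) % 2 ^ (p + m) +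
            2 ^ p * ((g / 2 ^ p - (c : ℤ) + k / 2 ^ p) % 2 ^ (n - p))) % 2 ^ n) ≠
          (g + k) % 2 ^ n).card : ℝ) / 2 ^ m ≤ (2 : ℝ) ^ (-(m : ℤ))) := by
  have hpn : p ≤ n := le_trans hp (Nat.sub_le n m)
  have h2p : (0 : ℤ) < 2 ^ p := by positivity
  have key : ∀ c : ℕ, c < 2 ^ m → c ≠ 2 ^ m - 1 →
      (((g % 2 ^ p + 2 ^ p * (c : ℤ) + k % 2 ^ p) % 2 ^ (p + m) +
          2 ^ p * ((g / 2 ^ p - (c : ℤ) + k / 2 ^ p) % 2 ^ (n - p))) % 2 ^ n) =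
        (g + k) % 2 ^ n := by
    intro c hc hne
    have hc2 : (c : ℤ) ≤ 2 ^ m - 2 := by
      have h1 : c + 2 ≤ 2 ^ m := by omega
      have h2 : ((c : ℤ) + 2) ≤ 2 ^ m := by exact_mod_cast h1
      linarith
    have hgm0 : 0 ≤ g % 2 ^ p := Int.emod_nonneg g (ne_of_gt h2p)
    have hgm1 : g % 2 ^ p < 2 ^ p := Int.emod_lt_of_pos g h2p
    have hkm0 : 0 ≤ k % 2 ^ p := Int.emod_nonneg k (ne_of_gt h2p)
    have hkm1 : k % 2 ^ p < 2 ^ p := Int.emod_lt_of_pos k h2p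
    have hcmul : 2 ^ p * (c : ℤ) ≤ 2 ^ p * (2 ^ m - 2) :=
      mul_le_mul_of_nonneg_left hc2 (le_of_lt h2p)
    have hc0 : (0 : ℤ) ≤ 2 ^ p * (c : ℤ) := by positivity
    have hA : (g % 2 ^ p + 2 ^ p * (c : ℤ) + k % 2 ^ p) % 2 ^ (p + m) =
        g % 2 ^ p + 2 ^ p * (c : ℤ) + k % 2 ^ p := by
      apply Int.emod_eq_of_lt
      · linarith
      · rw [pow_add]
        linarith
    rw [hA]
    have hn : (2 : ℤ) ^ n = 2 ^ p * 2 ^ (n - p) := by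
      rw [← pow_add]; congr 1; omega
    rw [hn, ← Int.mul_emod_mul_of_pos _ _ h2p,
      Int.add_emod, Int.emod_emod_of_dvd _ dvd_rfl, ← Int.add_emod]
    congr 1
    have hg' := Int.emod_add_mul_ediv g (2 ^ p)
    have hk' := Int.emod_add_mul_ediv k (2 ^ p)
    ring_nf
    ring_nf at hg' hk'
    linarith
  have hsub : ((Finset.range (2 ^ m)).filter fun c : ℕ =>
        (((g % 2 ^ p + 2 ^ p * (c : ℤ) + k % 2 ^ p) % 2 ^ (p + m) +
            2 ^ p * ((g / 2 ^ p - (c : ℤ) + k / 2 ^ p) % 2 ^ (n - p))) % 2 ^ n) ≠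
          (g + k) % 2 ^ n) ⊆ {2 ^ m - 1} := by
    intro c hc
    rw [Finset.mem_filter, Finset.mem_range] at hc
    rw [Finset.mem_singleton]
    by_contra h
    exact hc.2 (key c hc.1 h)
  refine ⟨hsub, ?_⟩
  have hcard := Finset.card_le_card hsub
  rw [Finset.card_singleton] at hcard
  have h1 : (2 : ℝ) ^ (-(m : ℤ)) = 1 / 2 ^ m := by
    rw [zpow_neg, zpow_natCast, one_div]
  rw [h1]
  gcongr
  exact_mod_cast hcard
end

section
/- The oblivious carry runway encoder decodes correctly on non-deviated coset values: for all g ∈ {0, …, 2^n − 1}, k ∈ ℤ, and c ∈ {0, …, 2^m − 2}, writing g₁ = g mod 2^p, g₂ = ⌊g/2^p⌋, k₀ = k mod 2^p, k₁ = ⌊k/2^p⌋, we have ((g₁ + k₀ + 2^p c) mod 2^{p+m}) + 2^p ((g₂ + k₁ − c) mod 2^{n−p}) ≡ g + k (mod 2^n). -/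
/-- **The oblivious carry runway encoder decodes correctly on non-deviated coset values.**
For `0 < p ≤ n − m`, `m ≥ 1`, `0 ≤ g < 2^n`, `0 ≤ c ≤ 2^m − 2` and any `k ∈ ℤ`, writing
`g₁ = g mod 2^p`, `g₂ = ⌊g/2^p⌋`, `k₀ = k mod 2^p`, `k₁ = ⌊k/2^p⌋`, we have
`((g₁ + k₀ + 2^p c) mod 2^{p+m}) + 2^p ((g₂ + k₁ − c) mod 2^{n−p}) ≡ g + k (mod 2^n)`. -/
theorem runway_decode_correct (n m p : ℕ) (hp : 0 < p) (hpn : p ≤ n - m) (hm : 1 ≤ m)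
    (g : ℤ) (hg0 : 0 ≤ g) (hg : g < 2 ^ n)
    (c : ℤ) (hc0 : 0 ≤ c) (hc : c ≤ 2 ^ m - 2) (k : ℤ) :
    (g % 2 ^ p + k % 2 ^ p + 2 ^ p * c) % 2 ^ (p + m) +
        2 ^ p * ((g / 2 ^ p + k / 2 ^ p - c) % 2 ^ (n - p)) ≡
      g + k [ZMOD 2 ^ n] := by
  have hmn : m ≤ n := by
    by_contra h
    push_neg at h
    omega
  have hpm : p + m ≤ n := by omega
  have h2p : (0:ℤ) < 2 ^ p := by positivity
  have hg1 : 0 ≤ g % 2 ^ p := Int.emod_nonneg g (by positivity)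
  have hk1 : 0 ≤ k % 2 ^ p := Int.emod_nonneg k (by positivity)
  have hg2 : g % 2 ^ p < 2 ^ p := Int.emod_lt_of_pos g h2p
  have hk2 : k % 2 ^ p < 2 ^ p := Int.emod_lt_of_pos k h2p
  set A : ℤ := g % 2 ^ p + k % 2 ^ p + 2 ^ p * c with hA
  set B : ℤ := g / 2 ^ p + k / 2 ^ p - c with hB
  have hAmod : A % 2 ^ (p + m) = A := by
    apply Int.emod_eq_of_lt
    · positivity
    · have hpow : (2:ℤ) ^ (p + m) = 2 ^ p * 2 ^ m := by rw [pow_add]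
      have h2m : (0:ℤ) < 2 ^ m := by positivity
      nlinarith
  rw [hAmod]
  have hgk : g + k = A + 2 ^ p * B := by
    have h1 := Int.mul_ediv_add_emod g (2 ^ p)
    have h2 := Int.mul_ediv_add_emod k (2 ^ p)
    simp only [hA, hB]
    ring_nf
    linarith
  rw [hgk]
  have hmod : 2 ^ p * (B % 2 ^ (n - p)) ≡ 2 ^ p * B [ZMOD 2 ^ p * 2 ^ (n - p)] :=
    Int.ModEq.mul_left' (Int.emod_emod_of_dvd B dvd_rfl)
  have hpowr : (2:ℤ) ^ p * 2 ^ (n - p) = 2 ^ n := by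
    rw [← pow_add]; congr 1; omega
  rw [hpowr] at hmod
  exact (Int.ModEq.refl A).add hmod
end

section
/- The oblivious runway encoder f(g, c) = ((g mod 2^p) + 2^p c, (⌊g/2^p⌋ − c) mod 2^{n−p}) is injective from (ℤ/2^nℤ) × (ℤ/2^mℤ) into (ℤ/2^{p+m}ℤ) × (ℤ/2^{n−p}ℤ), and it is surjective (hence bijective) when m ≤ n − p; in particular the runway representation has no leakage values. -/
/-!
Split a point `g < 2^n` as `g = 2^p q + r` with `r < 2^p` and `q < 2^{n-p}`. The first output
coordinate `r + 2^p c` stores `r` and `c` side by side, and the second stores `q − c` mod `2^{n-p}`,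
so `(g, c)` is recovered by adding `c` back. Conversely, every pair `(a, b)` is hit by the point
recovered in this way as long as `a / 2^p < 2^m ≤ 2^{n-p}`.
-/

open Set

/-- The runway encoder with `P = 2^p` and `N = 2^{n-p}`; since `c ≤ N`, the truncated
`N - c` stands for `-c` modulo `N`. -/
def runwayEncode (P N : ℕ) (gc : ℕ × ℕ) : ℕ × ℕ :=
  (gc.1 % P + P * gc.2, (gc.1 / P + (N - gc.2)) % N)

def runwayDecode (P N : ℕ) (ab : ℕ × ℕ) : ℕ × ℕ :=
  (P * ((ab.2 + ab.1 / P) % N) + ab.1 % P, ab.1 / P)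

section

variable {P N : ℕ}

theorem runwayDecode_runwayEncode (hP : 0 < P) {g c : ℕ} (hg : g < P * N) (hc : c ≤ N) :
    runwayDecode P N (runwayEncode P N (g, c)) = (g, c) := by
  have hdiv : (g % P + P * c) / P = c := by
    rw [Nat.add_mul_div_left _ _ hP, Nat.div_eq_of_lt (Nat.mod_lt g hP), zero_add]
  have hmod : (g % P + P * c) % P = g % P := by
    rw [Nat.add_mul_mod_self_left, Nat.mod_mod]
  have hquot : ((g / P + (N - c)) % N + c) % N = g / P := by
    rw [Nat.mod_add_mod, Nat.add_assoc, Nat.sub_add_cancel hc, Nat.add_mod_right,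
      Nat.mod_eq_of_lt (Nat.div_lt_of_lt_mul hg)]
  simp only [runwayEncode, runwayDecode, hdiv, hmod, hquot, Nat.div_add_mod]

theorem runwayEncode_runwayDecode (hP : 0 < P) {a b : ℕ} (ha : a / P ≤ N) (hb : b < N) :
    runwayEncode P N (runwayDecode P N (a, b)) = (a, b) := by
  have hdiv : (P * ((b + a / P) % N) + a % P) / P = (b + a / P) % N := by
    rw [Nat.mul_add_div hP, Nat.div_eq_of_lt (Nat.mod_lt a hP), add_zero]
  have hmod : (P * ((b + a / P) % N) + a % P) % P = a % P := by
    rw [Nat.mul_add_mod, Nat.mod_mod]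
  have hsecond : ((b + a / P) % N + (N - a / P)) % N = b := by
    rw [Nat.mod_add_mod, Nat.add_assoc, Nat.add_sub_cancel' ha, Nat.add_mod_right,
      Nat.mod_eq_of_lt hb]
  simp only [runwayEncode, runwayDecode, hdiv, hmod, hsecond, Nat.mod_add_div]

theorem runwayEncode_leftInvOn (hP : 0 < P) :
    LeftInvOn (runwayDecode P N) (runwayEncode P N) (Iio (P * N) ×ˢ Iic N) :=
  fun _ ⟨hg, hc⟩ => runwayDecode_runwayEncode hP hg hc

theorem runwayEncode_rightInvOn (hP : 0 < P) {M : ℕ} (hMN : M ≤ N) :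
    RightInvOn (runwayDecode P N) (runwayEncode P N) (Iio (P * M) ×ˢ Iio N) :=
  fun _ ⟨ha, hb⟩ => runwayEncode_runwayDecode hP
    ((Nat.div_lt_of_lt_mul ha).le.trans hMN) hb

theorem runwayDecode_mapsTo (hP : 0 < P) (M : ℕ) :
    MapsTo (runwayDecode P N) (Iio (P * M) ×ˢ Iio N) (Iio (P * N) ×ˢ Iio M) := by
  rintro ⟨a, b⟩ ⟨ha, hb⟩
  refine ⟨?_, Nat.div_lt_of_lt_mul ha⟩
  calc P * ((b + a / P) % N) + a % P
      < P * ((b + a / P) % N) + P := Nat.add_lt_add_left (Nat.mod_lt a hP) _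
    _ = P * ((b + a / P) % N + 1) := by ring
    _ ≤ P * N := Nat.mul_le_mul_left P (Nat.mod_lt _ (Nat.zero_lt_of_lt hb))

end

theorem runway_encoder_bijective_general (n m p : ℕ) (hpm : p + m ≤ n) :
    Set.InjOn
      (fun gc : ℕ × ℕ =>
        (gc.1 % 2 ^ p + 2 ^ p * gc.2, (gc.1 / 2 ^ p + (2 ^ (n - p) - gc.2)) % 2 ^ (n - p)))
      (Set.Iio (2 ^ n) ×ˢ Set.Iio (2 ^ m)) ∧
    (m ≤ n - p →
      Set.SurjOn
        (fun gc : ℕ × ℕ =>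
          (gc.1 % 2 ^ p + 2 ^ p * gc.2, (gc.1 / 2 ^ p + (2 ^ (n - p) - gc.2)) % 2 ^ (n - p)))
        (Set.Iio (2 ^ n) ×ˢ Set.Iio (2 ^ m))
        (Set.Iio (2 ^ (p + m)) ×ˢ Set.Iio (2 ^ (n - p)))) := by
  have hP : 0 < 2 ^ p := Nat.two_pow_pos p
  have hn : 2 ^ n = 2 ^ p * 2 ^ (n - p) := by rw [← pow_add, Nat.add_sub_cancel' (by omega)]
  have hmn : 2 ^ m ≤ 2 ^ (n - p) := Nat.pow_le_pow_right two_pos (by omega)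
  change InjOn (runwayEncode _ _) _ ∧ (_ → SurjOn (runwayEncode _ _) _ _)
  refine ⟨(runwayEncode_leftInvOn hP).injOn.mono ?_, fun _ => ?_⟩
  · rw [hn]
    exact prod_mono subset_rfl fun _ hc => (hc.trans_le hmn).le
  · rw [hn, pow_add]
    exact (runwayEncode_rightInvOn hP hmn).surjOn (runwayDecode_mapsTo hP _)

/-- **The oblivious runway encoder is injective, and bijective when `m ≤ n − p`.**
For `p ≥ 1` and `p + m ≤ n`, the encoder
`f(g, c) = ((g mod 2^p) + 2^p c, (⌊g/2^p⌋ − c) mod 2^{n−p})` is injective from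
`(ℤ/2^nℤ) × (ℤ/2^mℤ)` into `(ℤ/2^{p+m}ℤ) × (ℤ/2^{n−p}ℤ)`, and surjective (hence
bijective) when `m ≤ n − p`; in particular the runway representation has no leakage
values.  (The subtraction `⌊g/2^p⌋ − c` mod `2^{n−p}` is expressed in `ℕ` as
`⌊g/2^p⌋ + (2^{n−p} − c)` mod `2^{n−p}`, which agrees since `c < 2^m ≤ 2^{n−p}`.) -/
theorem runway_encoder_bijective (n m p : ℕ) (hp : 1 ≤ p) (hpm : p + m ≤ n) :
    Set.InjOn
      (fun gc : ℕ × ℕ =>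
        (gc.1 % 2 ^ p + 2 ^ p * gc.2, (gc.1 / 2 ^ p + (2 ^ (n - p) - gc.2)) % 2 ^ (n - p)))
      (Set.Iio (2 ^ n) ×ˢ Set.Iio (2 ^ m)) ∧
    (m ≤ n - p →
      Set.SurjOn
        (fun gc : ℕ × ℕ =>
          (gc.1 % 2 ^ p + 2 ^ p * gc.2, (gc.1 / 2 ^ p + (2 ^ (n - p) - gc.2)) % 2 ^ (n - p)))
        (Set.Iio (2 ^ n) ×ˢ Set.Iio (2 ^ m))
        (Set.Iio (2 ^ (p + m)) ×ˢ Set.Iio (2 ^ (n - p)))) :=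
  runway_encoder_bijective_general n m p hpm
end

section
/- Let P = (G, u, E, v, C, L, f) be an approximate encoded permutation with Dev(P) ≤ ε ≤ 1/2. For any unit vector Σ_g a_g|g⟩ over G, the inner product between the ideal output state Σ_{g,c} (a_g/√|C|)|u(g)⟩|c⟩ and the actual output state Σ_{g,c} (a_g/√|C|)|f⁻¹(v(f(g,c)))⟩ (states over the basis (G×C) ⊔ L) has magnitude at least 1 − 2ε. -/
/-!
Write the ideal and actual outputs as `Σ_g a_g φ_g` and `Σ_h a_h χ_h`, where `φ_g` is the uniform
state on the coset `{u g} × C` and `χ_h` the uniform state on the image of `{h} × C` under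
`f⁻¹ ∘ v ∘ f`. Their Gram matrix `M g h = ⟨φ_g, χ_h⟩` is `overlap g h / |C|`. Since both
encodings are injective, its rows and columns sum to at most `1`, and its diagonal entry
`1 - |Deviated_g| / |C|` is at least `1 - ε`. So `M - (1 - ε) I` is entrywise nonnegative with row
and column sums at most `ε`; by the Schur test its quadratic form has modulus at most `ε`, whence
`Re ⟨ideal, actual⟩ ≥ (1 - ε) - ε`.
-/

open Finset Function ComplexConjugate

theorem norm_sum_conj_mul_mul_le_of_sum_le {ι : Type*} [Fintype ι] (O : ι → ι → ℝ) (ρ : ℝ)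
    (hO : ∀ i j, 0 ≤ O i j) (hrow : ∀ i, ∑ j, O i j ≤ ρ) (hcol : ∀ j, ∑ i, O i j ≤ ρ)
    (a : ι → ℂ) :
    ‖∑ i, ∑ j, conj (a i) * a j * O i j‖ ≤ ρ * ∑ i, ‖a i‖ ^ 2 := by
  calc ‖∑ i, ∑ j, conj (a i) * a j * O i j‖
      ≤ ∑ i, ∑ j, ‖a i‖ * ‖a j‖ * O i j := by
        refine (norm_sum_le _ _).trans (sum_le_sum fun i _ => ?_)
        refine (norm_sum_le _ _).trans_eq (sum_congr rfl fun j _ => ?_)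
        rw [norm_mul, norm_mul, Complex.norm_conj, Complex.norm_real, Real.norm_of_nonneg (hO i j)]
    _ ≤ ∑ i, ∑ j, (‖a i‖ ^ 2 * O i j + ‖a j‖ ^ 2 * O i j) / 2 := by
        gcongr with i _ j _
        nlinarith [two_mul_le_add_sq ‖a i‖ ‖a j‖, hO i j]
    _ = (∑ i, ‖a i‖ ^ 2 * ∑ j, O i j + ∑ j, ‖a j‖ ^ 2 * ∑ i, O i j) / 2 := by
        simp only [mul_sum]
        rw [sum_comm (f := fun j i => ‖a j‖ ^ 2 * O i j), ← sum_add_distrib, sum_div]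
        simp only [← sum_add_distrib, sum_div]
    _ ≤ (∑ i, ‖a i‖ ^ 2 * ρ + ∑ j, ‖a j‖ ^ 2 * ρ) / 2 := by
        gcongr with i _ j _
        · exact hrow i
        · exact hcol j
    _ = ρ * ∑ i, ‖a i‖ ^ 2 := by rw [← sum_mul]; ring

theorem one_sub_two_mul_le_re_sum_conj_mul_mul {ι : Type*} [Fintype ι] [DecidableEq ι]
    (M : ι → ι → ℝ) (ε : ℝ) (hM : ∀ i j, i ≠ j → 0 ≤ M i j) (hdiag : ∀ i, 1 - ε ≤ M i i)
    (hrow : ∀ i, ∑ j, M i j ≤ 1) (hcol : ∀ j, ∑ i, M i j ≤ 1) (a : ι → ℂ) :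
    (1 - 2 * ε) * ∑ i, ‖a i‖ ^ 2 ≤ (∑ i, ∑ j, conj (a i) * a j * M i j).re := by
  set O : ι → ι → ℝ := fun i j => M i j - if i = j then 1 - ε else 0
  have hO : ∀ i j, 0 ≤ O i j := fun i j => by
    by_cases h : i = j
    · subst h; simp [O, hdiag i]
    · simp [O, h, hM i j h]
  have hOrow : ∀ i, ∑ j, O i j ≤ ε := fun i => by
    simp only [O, sum_sub_distrib, sum_ite_eq, mem_univ, if_true]
    linarith [hrow i]
  have hOcol : ∀ j, ∑ i, O i j ≤ ε := fun j => by
    simp only [O, sum_sub_distrib, sum_ite_eq', mem_univ, if_true]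
    linarith [hcol j]
  have hsplit : ∑ i, ∑ j, conj (a i) * a j * M i j =
      ((1 - ε) * ∑ i, ‖a i‖ ^ 2 : ℝ) + ∑ i, ∑ j, conj (a i) * a j * O i j := by
    have hMO : ∀ i j, (M i j : ℂ) = O i j + if i = j then ((1 - ε : ℝ) : ℂ) else 0 :=
      fun i j => by split_ifs <;> simp [O, *]
    simp only [hMO, mul_add, sum_add_distrib, mul_ite, mul_zero, sum_ite_eq, mem_univ, if_true,
      Complex.conj_mul']
    push_cast
    rw [← sum_mul]
    ring
  have hbound := norm_sum_conj_mul_mul_le_of_sum_le O ε hO hOrow hOcol a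
  rw [hsplit, Complex.add_re, Complex.ofReal_re]
  linarith [(abs_le.1 ((Complex.abs_re_le_norm _).trans hbound)).1]

theorem sum_ite_apply_eq_of_injective {α X : Type*} [Fintype α] [DecidableEq X] {φ : α → X}
    (hφ : Injective φ) (x : X) [Decidable (∃ a, φ a = x)] :
    (∑ a, if φ a = x then 1 else 0 : ℕ) = if ∃ a, φ a = x then 1 else 0 := by
  split_ifs with h
  · obtain ⟨a, rfl⟩ := h
    classical
    simp only [hφ.eq_iff, sum_ite_eq', mem_univ, if_true]
  · exact sum_eq_zero fun a _ => if_neg fun ha => h ⟨a, ha⟩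

section Overlap

variable {G C X : Type*} [Fintype C] [DecidableEq X]

def overlap (ι τ : G × C → X) (g h : G) : ℕ :=
  ∑ c, ∑ c', if ι (g, c) = τ (h, c') then 1 else 0

theorem sum_overlap_left_le [Fintype G] {ι : G × C → X} (hι : Injective ι) (τ : G × C → X)
    (h : G) : ∑ g, overlap ι τ g h ≤ Fintype.card C := by
  calc ∑ g, overlap ι τ g h
      = ∑ c', ∑ p : G × C, if ι p = τ (h, c') then 1 else 0 := by
        rw [sum_comm (γ := C), Fintype.sum_prod_type]
        rfl
    _ ≤ ∑ _c' : C, 1 := sum_le_sum fun c' _ => by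
        rw [sum_ite_apply_eq_of_injective hι]; split_ifs <;> simp
    _ = Fintype.card C := by simp

theorem sum_overlap_right_le [Fintype G] (ι : G × C → X) {τ : G × C → X} (hτ : Injective τ)
    (g : G) : ∑ h, overlap ι τ g h ≤ Fintype.card C := by
  calc ∑ h, overlap ι τ g h
      = ∑ c, ∑ q : G × C, if τ q = ι (g, c) then 1 else 0 := by
        simp only [overlap, Fintype.sum_prod_type, @eq_comm _ (τ _)]
        rw [sum_comm]
    _ ≤ ∑ _c : C, 1 := sum_le_sum fun c _ => by
        rw [sum_ite_apply_eq_of_injective hτ]; split_ifs <;> simp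
    _ = Fintype.card C := by simp

theorem overlap_self_add_card_deviated {ι : G × C → X} (hι : Injective ι)
    (τ : G × C → X) (g : G) :
    overlap ι τ g g + #{c' | ∀ c, τ (g, c') ≠ ι (g, c)} = Fintype.card C := by
  have hιg : Injective fun c => ι (g, c) := hι.comp (Prod.mk_right_injective g)
  have hcovered : overlap ι τ g g = #{c' | ∃ c, ι (g, c) = τ (g, c')} := by
    rw [overlap, sum_comm, card_filter]
    exact sum_congr rfl fun c' _ => sum_ite_apply_eq_of_injective hιg _
  rw [hcovered, ← card_univ,
    ← card_filter_add_card_filter_not (s := univ) (fun c' => ∃ c, ι (g, c) = τ (g, c'))]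
  simp only [not_exists, ne_comm]

theorem overlap_self_div_card [Nonempty C] {ι : G × C → X} (hι : Injective ι)
    (τ : G × C → X) (g : G) :
    (overlap ι τ g g : ℝ) / Fintype.card C =
      1 - (#{c' | ∀ c, τ (g, c') ≠ ι (g, c)} : ℝ) / Fintype.card C := by
  have hn : (Fintype.card C : ℝ) ≠ 0 := Nat.cast_ne_zero.2 Fintype.card_ne_zero
  have hcount : (overlap ι τ g g : ℝ) + #{c' | ∀ c, τ (g, c') ≠ ι (g, c)} = Fintype.card C := by
    exact_mod_cast overlap_self_add_card_deviated hι τ g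
  rw [eq_sub_iff_add_eq, ← add_div, hcount, div_self hn]

end Overlap

theorem sum_conj_indicator_mul_indicator {X ι κ : Type*} [Fintype X] [DecidableEq X]
    [Fintype ι] [Fintype κ] (p : ι → X) (q : κ → X) (α : ι → ℂ) (β : κ → ℂ) :
    (∑ x, conj (∑ i, α i * if x = p i then 1 else 0) * ∑ k, β k * if x = q k then 1 else 0) =
      ∑ i, ∑ k, conj (α i) * β k * if p i = q k then 1 else 0 := by
  simp only [map_sum, map_mul, sum_mul, mul_sum]
  rw [sum_comm]
  refine (sum_congr rfl fun k _ => sum_comm).trans sum_comm |>.trans ?_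
  refine sum_congr rfl fun i _ => sum_congr rfl fun k _ => ?_
  simp [mul_ite, ite_mul, sum_ite_eq', eq_comm]

theorem sum_conj_mul_eq_sum_overlap {G C X : Type*} [Fintype G] [Fintype C] [Fintype X]
    [DecidableEq X] (ι τ : G × C → X) (a : G → ℂ) :
    (∑ x, conj (∑ g, ∑ c, (a g / (Real.sqrt (Fintype.card C) : ℂ)) *
          if x = ι (g, c) then 1 else 0) *
        ∑ g, ∑ c, (a g / (Real.sqrt (Fintype.card C) : ℂ)) * if x = τ (g, c) then 1 else 0) =
      ∑ g, ∑ h, conj (a g) * a h * ((overlap ι τ g h / Fintype.card C : ℝ) : ℂ) := by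
  set s : ℂ := ((Real.sqrt (Fintype.card C) : ℝ) : ℂ)
  have hsum := sum_conj_indicator_mul_indicator ι τ (fun p => a p.1 / s) (fun q => a q.1 / s)
  simp only [Fintype.sum_prod_type] at hsum
  rw [hsum]
  refine sum_congr rfl fun g _ => ?_
  rw [sum_comm]
  refine sum_congr rfl fun h _ => ?_
  have hcoeff : conj (a g / s) * (a h / s) = conj (a g) * a h / Fintype.card C := by
    rw [map_div₀, Complex.conj_ofReal, div_mul_div_comm, ← Complex.ofReal_mul,
      Real.mul_self_sqrt (Nat.cast_nonneg _), Complex.ofReal_natCast]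
  simp only [hcoeff, ← mul_sum, overlap]
  push_cast [apply_ite ((↑) : ℝ → ℂ)]
  ring

theorem fidelity_bound_general {G E C L : Type*} [Fintype G] [Fintype C] [Fintype L]
    [DecidableEq E] [DecidableEq G] [DecidableEq C] [DecidableEq L] [Nonempty C]
    (u : Equiv.Perm G) (v : Equiv.Perm E) (f : (G × C) ⊕ L ≃ E)
    (ε : ℝ)
    (hdev : ∀ g : G,
      (((Finset.univ.filter fun c : C =>
            ∀ c' : C, v (f (Sum.inl (g, c))) ≠ f (Sum.inl (u g, c'))).card : ℝ) /
          Fintype.card C) ≤ ε)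
    (a : G → ℂ) (ha : ∑ g, ‖a g‖ ^ 2 = 1) :
    1 - 2 * ε ≤
      ‖∑ x : (G × C) ⊕ L,
          (starRingEnd ℂ)
            (∑ g : G, ∑ c : C,
              (a g / (Real.sqrt (Fintype.card C) : ℂ)) *
                if x = Sum.inl (u g, c) then 1 else 0) *
          (∑ g : G, ∑ c : C,
            (a g / (Real.sqrt (Fintype.card C) : ℂ)) *
              if x = f.symm (v (f (Sum.inl (g, c)))) then 1 else 0)‖ := by
  let ι : G × C → (G × C) ⊕ L := fun p => Sum.inl (u p.1, p.2)
  let τ : G × C → (G × C) ⊕ L := fun p => f.symm (v (f (Sum.inl p)))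
  have hι : Injective ι := Sum.inl_injective.comp (u.injective.prodMap injective_id)
  have hτ : Injective τ :=
    f.symm.injective.comp (v.injective.comp (f.injective.comp Sum.inl_injective))
  have hn : (0 : ℝ) < Fintype.card C := Nat.cast_pos.2 Fintype.card_pos
  have hdiag : ∀ g, 1 - ε ≤ (overlap ι τ g g : ℝ) / Fintype.card C := fun g => by
    have hdev_g : (#{c' | ∀ c, τ (g, c') ≠ ι (g, c)} : ℝ) / Fintype.card C ≤ ε := by
      simpa only [τ, ι, ne_eq, Equiv.symm_apply_eq] using hdev g
    rw [overlap_self_div_card hι]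
    linarith
  have hrow : ∀ g, ∑ h, (overlap ι τ g h : ℝ) / Fintype.card C ≤ 1 := fun g => by
    rw [← sum_div, div_le_one hn]
    exact_mod_cast sum_overlap_right_le ι hτ g
  have hcol : ∀ h, ∑ g, (overlap ι τ g h : ℝ) / Fintype.card C ≤ 1 := fun h => by
    rw [← sum_div, div_le_one hn]
    exact_mod_cast sum_overlap_left_le hι τ h
  have hre := one_sub_two_mul_le_re_sum_conj_mul_mul
    (fun g h => (overlap ι τ g h : ℝ) / Fintype.card C) ε (fun _ _ _ => by positivity)
    hdiag hrow hcol a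
  rw [ha, mul_one, ← sum_conj_mul_eq_sum_overlap ι τ a] at hre
  exact hre.trans (Complex.re_le_norm _)

/-- **Fidelity bound for approximate encoded permutations.** Let
`P = (G, u, E, v, C, L, f)` be an approximate encoded permutation whose deviation
(the maximum over `g` of the fraction of deviated coset values) is at most `ε ≤ 1/2`.
For any unit input `Σ_g a_g|g⟩`, the inner product between the ideal output state
`Σ_{g,c} (a_g/√|C|)|u(g), c⟩` and the actual output state
`Σ_{g,c} (a_g/√|C|)|f⁻¹(v(f(g,c)))⟩`, both states over the basis `(G×C) ⊔ L`,
has magnitude at least `1 − 2ε`. -/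
theorem fidelity_bound {G E C L : Type*} [Fintype G] [Fintype C] [Fintype L]
    [DecidableEq E] [DecidableEq G] [DecidableEq C] [DecidableEq L] [Nonempty C]
    (u : Equiv.Perm G) (v : Equiv.Perm E) (f : (G × C) ⊕ L ≃ E)
    (ε : ℝ) (hε : ε ≤ 1 / 2)
    (hdev : ∀ g : G,
      (((Finset.univ.filter fun c : C =>
            ∀ c' : C, v (f (Sum.inl (g, c))) ≠ f (Sum.inl (u g, c'))).card : ℝ) /
          Fintype.card C) ≤ ε)
    (a : G → ℂ) (ha : ∑ g, ‖a g‖ ^ 2 = 1) :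
    1 - 2 * ε ≤
      ‖∑ x : (G × C) ⊕ L,
          (starRingEnd ℂ)
            (∑ g : G, ∑ c : C,
              (a g / (Real.sqrt (Fintype.card C) : ℂ)) *
                if x = Sum.inl (u g, c) then 1 else 0) *
          (∑ g : G, ∑ c : C,
            (a g / (Real.sqrt (Fintype.card C) : ℂ)) *
              if x = f.symm (v (f (Sum.inl (g, c)))) then 1 else 0)‖ :=
  fidelity_bound_general u v f ε hdev a ha
end

section
/- If an approximate encoded permutation has deviation at most ε ≤ 1/2, then the trace distance between the actual output state (obtained by encoding with a uniform superposition of coset values, applying the encoded permutation, and decoding) and the ideal output state is at most 2√ε. -/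
/-!
Over `p = (g, c)` put `w p = a g / √|C|`; then `ψ_d = ∑ w p • δ (u g, c)` and
`ψ_a = ∑ w p • δ (f⁻¹ (v (f (g, c))))`. If `(g, c)` is not deviated, its image in `ψ_a` is some
`δ (u g, c')` of `ψ_d` with the same weight, and distinct such `(g, c)` hit distinct `c'`. So
`ψ_d - ψ_a` is the difference of the unmatched parts of `ψ_d` and `ψ_a`, which both have squared
norm `∑ ‖w p‖²` over the deviated `p`, at most `ε`; hence `‖ψ_d - ψ_a‖ ≤ 2√ε`. For unit vectors,
`1 - ‖⟪x, y⟫‖² ≤ 2 - 2 re ⟪x, y⟫ = ‖x - y‖²`, which bounds the trace distance.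
-/

open Finset

section Orthonormal

variable {𝕜 E κ : Type*} [RCLike 𝕜] [NormedAddCommGroup E] [InnerProductSpace 𝕜 E]

theorem Orthonormal.norm_sum_smul {b : κ → E} (hb : Orthonormal 𝕜 b) (w : κ → 𝕜)
    (s : Finset κ) : ‖∑ p ∈ s, w p • b p‖ = √(∑ p ∈ s, ‖w p‖ ^ 2) := by
  rw [← Real.sqrt_sq (norm_nonneg _), ← inner_self_eq_norm_sq (𝕜 := 𝕜), hb.inner_sum]
  simp only [RCLike.conj_mul, map_sum, ← RCLike.ofReal_pow, RCLike.ofReal_re]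

theorem Orthonormal.norm_sum_smul_sub_sum_smul_le [Fintype κ] [DecidableEq κ] {b₁ b₂ : κ → E}
    (hb₁ : Orthonormal 𝕜 b₁) (hb₂ : Orthonormal 𝕜 b₂) (w : κ → 𝕜) (N : Finset κ)
    (hN : ∀ p ∉ N, ∃ q, b₂ p = b₁ q ∧ w q = w p) :
    ‖∑ p, w p • b₁ p - ∑ p, w p • b₂ p‖ ≤ 2 * √(∑ p ∈ N, ‖w p‖ ^ 2) := by
  choose! φ hφ using hN
  have hφ_inj : Set.InjOn φ ↑Nᶜ := fun p hp p' hp' h => hb₂.linearIndependent.injective <| by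
    rw [(hφ p (mem_compl.mp hp)).1, (hφ p' (mem_compl.mp hp')).1, h]
  have hmatched : ∑ q ∈ Nᶜ.image φ, w q • b₁ q = ∑ p ∈ Nᶜ, w p • b₂ p := by
    rw [sum_image hφ_inj]
    refine sum_congr rfl fun p hp => ?_
    rw [(hφ p (mem_compl.mp hp)).1, (hφ p (mem_compl.mp hp)).2]
  have hunmatched : ∑ q ∈ (Nᶜ.image φ)ᶜ, ‖w q‖ ^ 2 = ∑ p ∈ N, ‖w p‖ ^ 2 := by
    have himage : ∑ q ∈ Nᶜ.image φ, ‖w q‖ ^ 2 = ∑ p ∈ Nᶜ, ‖w p‖ ^ 2 := by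
      rw [sum_image hφ_inj]
      exact sum_congr rfl fun p hp => by rw [(hφ p (mem_compl.mp hp)).2]
    have := sum_compl_add_sum (Nᶜ.image φ) fun q => ‖w q‖ ^ 2
    have := sum_compl_add_sum N fun p => ‖w p‖ ^ 2
    linarith
  have hdiff : ∑ p, w p • b₁ p - ∑ p, w p • b₂ p
      = ∑ q ∈ (Nᶜ.image φ)ᶜ, w q • b₁ q - ∑ p ∈ N, w p • b₂ p := by
    rw [← sum_compl_add_sum (Nᶜ.image φ), ← sum_compl_add_sum N, hmatched]
    abel
  calc ‖∑ p, w p • b₁ p - ∑ p, w p • b₂ p‖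
      ≤ ‖∑ q ∈ (Nᶜ.image φ)ᶜ, w q • b₁ q‖ + ‖∑ p ∈ N, w p • b₂ p‖ := hdiff ▸ norm_sub_le _ _
    _ = 2 * √(∑ p ∈ N, ‖w p‖ ^ 2) := by
      rw [hb₁.norm_sum_smul, hb₂.norm_sum_smul, hunmatched, two_mul]

end Orthonormal

theorem sqrt_one_sub_norm_inner_sq_le_norm_sub {𝕜 E : Type*} [RCLike 𝕜] [NormedAddCommGroup E]
    [InnerProductSpace 𝕜 E] {x y : E} (hx : ‖x‖ = 1) (hy : ‖y‖ = 1) :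
    √(1 - ‖(inner 𝕜 x y : 𝕜)‖ ^ 2) ≤ ‖x - y‖ := by
  rw [← Real.sqrt_sq (norm_nonneg (x - y))]
  refine Real.sqrt_le_sqrt ?_
  rw [@norm_sub_sq 𝕜, hx, hy]
  nlinarith [RCLike.re_le_norm (inner 𝕜 x y : 𝕜), sq_nonneg (1 - ‖(inner 𝕜 x y : 𝕜)‖)]

section Superposition

variable {𝕜 ι κ : Type*} [RCLike 𝕜] [DecidableEq ι] [Fintype κ]

noncomputable def superposition (e : κ → ι) (w : κ → 𝕜) : EuclideanSpace 𝕜 ι :=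
  ∑ p, w p • EuclideanSpace.single (e p) 1

theorem superposition_apply (e : κ → ι) (w : κ → 𝕜) (x : ι) :
    superposition e w x = ∑ p, w p * if x = e p then 1 else 0 := by
  simp [superposition, WithLp.ofLp_sum, Pi.single_apply]

theorem norm_superposition [Fintype ι] {e : κ → ι} (he : Function.Injective e) (w : κ → 𝕜) :
    ‖superposition e w‖ = √(∑ p, ‖w p‖ ^ 2) :=
  (EuclideanSpace.orthonormal_single.comp e he).norm_sum_smul w univ

theorem norm_superposition_sub_le [Fintype ι] [DecidableEq κ] {e₁ e₂ : κ → ι} (he₁ : Function.Injective e₁)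
    (he₂ : Function.Injective e₂) (w : κ → 𝕜) (N : Finset κ)
    (hN : ∀ p ∉ N, ∃ q, e₂ p = e₁ q ∧ w q = w p) :
    ‖superposition e₁ w - superposition e₂ w‖ ≤ 2 * √(∑ p ∈ N, ‖w p‖ ^ 2) := by
  refine (EuclideanSpace.orthonormal_single.comp e₁ he₁).norm_sum_smul_sub_sum_smul_le
    (EuclideanSpace.orthonormal_single.comp e₂ he₂) w N fun p hp => ?_
  obtain ⟨q, heq, hwq⟩ := hN p hp
  exact ⟨q, congrArg (EuclideanSpace.single · 1) heq, hwq⟩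

end Superposition

theorem Complex.norm_div_sqrt_sq (z : ℂ) {r : ℝ} (hr : 0 ≤ r) :
    ‖z / (√r : ℂ)‖ ^ 2 = ‖z‖ ^ 2 / r := by
  rw [norm_div, div_pow, Complex.norm_real, Real.norm_eq_abs, abs_of_nonneg (Real.sqrt_nonneg r),
    Real.sq_sqrt hr]

section UniformCoset

variable {G C 𝕜 : Type*} [Fintype G] [Fintype C] [RCLike 𝕜]

theorem sum_prod_norm_sq_div_card (a : G → 𝕜) [Nonempty C] :
    ∑ p : G × C, ‖a p.1‖ ^ 2 / Fintype.card C = ∑ g, ‖a g‖ ^ 2 := by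
  rw [Fintype.sum_prod_type]
  refine sum_congr rfl fun g _ => ?_
  dsimp only
  rw [sum_const, card_univ, nsmul_eq_mul, mul_div_cancel₀ _ (by positivity)]

theorem sum_filter_prod_norm_sq_div_card_le (P : G → C → Prop) [∀ g, DecidablePred (P g)]
    (a : G → 𝕜) {ε : ℝ} (hP : ∀ g, (#(univ.filter (P g)) : ℝ) / Fintype.card C ≤ ε) :
    ∑ p ∈ univ.filter (fun p : G × C => P p.1 p.2), ‖a p.1‖ ^ 2 / Fintype.card C
      ≤ ε * ∑ g, ‖a g‖ ^ 2 := by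
  rw [sum_filter, Fintype.sum_prod_type, mul_sum]
  refine sum_le_sum fun g _ => ?_
  rw [← sum_filter]
  dsimp only
  rw [sum_const, nsmul_eq_mul, mul_div_left_comm, mul_comm]
  exact mul_le_mul_of_nonneg_right (hP g) (sq_nonneg _)

end UniformCoset

theorem trace_distance_bound_general {G E C L : Type*} [Fintype G] [Fintype C] [Fintype L]
    [DecidableEq E] [DecidableEq G] [DecidableEq C] [DecidableEq L] [Nonempty C]
    (u : Equiv.Perm G) (v : Equiv.Perm E) (f : (G × C) ⊕ L ≃ E)
    (ε : ℝ)
    (hdev : ∀ g : G,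
      (((Finset.univ.filter fun c : C =>
            ∀ c' : C, v (f (Sum.inl (g, c))) ≠ f (Sum.inl (u g, c'))).card : ℝ) /
          Fintype.card C) ≤ ε)
    (a : G → ℂ) (ha : ∑ g, ‖a g‖ ^ 2 = 1) :
    Real.sqrt (1 -
      ‖∑ x : (G × C) ⊕ L,
          (starRingEnd ℂ)
            (∑ g : G, ∑ c : C,
              (a g / (Real.sqrt (Fintype.card C) : ℂ)) *
                if x = Sum.inl (u g, c) then 1 else 0) *
          (∑ g : G, ∑ c : C,
            (a g / (Real.sqrt (Fintype.card C) : ℂ)) *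
              if x = f.symm (v (f (Sum.inl (g, c)))) then 1 else 0)‖ ^ 2) ≤
      2 * Real.sqrt ε := by
  set w : G × C → ℂ := fun p => a p.1 / (√(Fintype.card C) : ℂ)
  set e₁ : G × C → (G × C) ⊕ L := fun p => Sum.inl (u p.1, p.2)
  set e₂ : G × C → (G × C) ⊕ L := fun p => f.symm (v (f (Sum.inl p)))
  have he₁ : Function.Injective e₁ :=
    Sum.inl_injective.comp (u.injective.prodMap Function.injective_id)
  have he₂ : Function.Injective e₂ :=
    f.symm.injective.comp (v.injective.comp (f.injective.comp Sum.inl_injective))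
  have hunit {e : G × C → (G × C) ⊕ L} (he : Function.Injective e) :
      ‖superposition e w‖ = 1 := by
    simp only [norm_superposition he, w, Complex.norm_div_sqrt_sq _ (Nat.cast_nonneg _),
      sum_prod_norm_sq_div_card, ha, Real.sqrt_one]
  set N := univ.filter fun p : G × C => ∀ c', v (f (Sum.inl p)) ≠ f (Sum.inl (u p.1, c'))
  have hmatch : ∀ p ∉ N, ∃ q, e₂ p = e₁ q ∧ w q = w p := by
    intro p hp
    obtain ⟨c', hc'⟩ : ∃ c', v (f (Sum.inl p)) = f (Sum.inl (u p.1, c')) := by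
      simpa [N] using hp
    exact ⟨(p.1, c'), by simp only [e₁, e₂, hc', Equiv.symm_apply_apply], rfl⟩
  have hN : ∑ p ∈ N, ‖w p‖ ^ 2 ≤ ε := by
    have := sum_filter_prod_norm_sq_div_card_le _ a hdev
    rw [ha, mul_one] at this
    simpa only [w, Complex.norm_div_sqrt_sq _ (Nat.cast_nonneg _)] using this
  calc _ = √(1 - ‖(inner ℂ (superposition e₁ w) (superposition e₂ w) : ℂ)‖ ^ 2) := by
        simp only [PiLp.inner_apply, RCLike.inner_apply', superposition_apply]
        simp only [Fintype.sum_prod_type, w, e₁, e₂]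
    _ ≤ ‖superposition e₁ w - superposition e₂ w‖ :=
        sqrt_one_sub_norm_inner_sq_le_norm_sub (hunit he₁) (hunit he₂)
    _ ≤ 2 * √(∑ p ∈ N, ‖w p‖ ^ 2) := norm_superposition_sub_le he₁ he₂ w N hmatch
    _ ≤ 2 * √ε := by gcongr

/-- **Trace distance bound for approximate encoded permutations.** Let
`P = (G, u, E, v, C, L, f)` be an approximate encoded permutation whose deviation
(the maximum over `g` of the fraction of deviated coset values) is at most `ε ≤ 1/2`.
For any unit input `Σ_g a_g|g⟩`, with ideal output `|ψ_d⟩ = Σ_{g,c}(a_g/√|C|)|u(g),c⟩`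
and actual output `|ψ_a⟩ = Σ_{g,c}(a_g/√|C|)|f⁻¹(v(f(g,c)))⟩` (states over the basis
`(G×C) ⊔ L`), the trace distance `√(1 − |⟨ψ_d|ψ_a⟩|²)` between the corresponding pure
states is at most `2√ε`. -/
theorem trace_distance_bound {G E C L : Type*} [Fintype G] [Fintype C] [Fintype L]
    [DecidableEq E] [DecidableEq G] [DecidableEq C] [DecidableEq L] [Nonempty C]
    (u : Equiv.Perm G) (v : Equiv.Perm E) (f : (G × C) ⊕ L ≃ E)
    (ε : ℝ) (hε : ε ≤ 1 / 2)
    (hdev : ∀ g : G,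
      (((Finset.univ.filter fun c : C =>
            ∀ c' : C, v (f (Sum.inl (g, c))) ≠ f (Sum.inl (u g, c'))).card : ℝ) /
          Fintype.card C) ≤ ε)
    (a : G → ℂ) (ha : ∑ g, ‖a g‖ ^ 2 = 1) :
    Real.sqrt (1 -
      ‖∑ x : (G × C) ⊕ L,
          (starRingEnd ℂ)
            (∑ g : G, ∑ c : C,
              (a g / (Real.sqrt (Fintype.card C) : ℂ)) *
                if x = Sum.inl (u g, c) then 1 else 0) *
          (∑ g : G, ∑ c : C,
            (a g / (Real.sqrt (Fintype.card C) : ℂ)) *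
              if x = f.symm (v (f (Sum.inl (g, c)))) then 1 else 0)‖ ^ 2) ≤
      2 * Real.sqrt ε :=
  trace_distance_bound_general u v f ε hdev a ha
end

section
/- When adding a constant k with 0 ≤ k < N into a coset-encoded register, starting from a uniformly random coset value c ∈ {0, …, 2^m − 1}, the probability that the encoded addition produces a value ≥ 2^m·N (i.e. leaks or overflows the coset range) is at most 2^{−m}. -/
/-- When adding a constant `k` with `0 ≤ k < N` into a coset-encoded register holding
`g < N`, starting from a uniformly random coset value `c ∈ {0, …, 2^m − 1}`, the
probability that the encoded addition produces a value `≥ 2^m·N` (i.e. leaks or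
overflows the coset range) is at most `2^{−m}`. -/
theorem coset_overflow_probability (N m g k : ℕ) (hN : 1 ≤ N) (hg : g < N) (hk : k < N) :
    (((Finset.range (2 ^ m)).filter fun c => 2 ^ m * N ≤ g + c * N + k).card : ℝ) /
      2 ^ m ≤ (2 : ℝ) ^ (-(m : ℤ)) := by
  have hsub : (Finset.range (2 ^ m)).filter (fun c => 2 ^ m * N ≤ g + c * N + k)
      ⊆ {2 ^ m - 1} := by
    intro c hc
    simp only [Finset.mem_filter, Finset.mem_range] at hc
    obtain ⟨hlt, hle⟩ := hc
    have h1 : 2 ^ m * N < (c + 2) * N := by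
      calc 2 ^ m * N ≤ g + c * N + k := hle
        _ < N + c * N + N := by omega
        _ = (c + 2) * N := by ring
    have h2 : 2 ^ m < c + 2 := lt_of_mul_lt_mul_right h1 (Nat.zero_le N)
    simp only [Finset.mem_singleton]
    omega
  have hcard : ((Finset.range (2 ^ m)).filter
      (fun c => 2 ^ m * N ≤ g + c * N + k)).card ≤ 1 := by
    simpa using Finset.card_le_card hsub
  have hpos : (0 : ℝ) < 2 ^ m := by positivity
  rw [div_le_iff₀ hpos]
  have : ((2:ℝ) ^ (-(m:ℤ))) * 2 ^ m = 1 := by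
    rw [← zpow_natCast (2:ℝ) m, ← zpow_add₀ (by norm_num : (2:ℝ) ≠ 0)]
    simp
  rw [this]
  exact_mod_cast hcard
end
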